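/- arXiv:2010.05827 — 2 statements merged into one kernel-verified Lean document; each statement's English description precedes it below -/
import Mathlib

section
/- Let N ≥ 2, let M be an N×N antisymmetric integer matrix with nonnegative upper entries, let k be an integer, and suppose p_j = k·δ_{j,1} + k·δ_{j,N−1} − Δp_j for all 1 ≤ j ≤ N−1. Then for every 1 ≤ n ≤ N−1 one has N·k ≥ (N−n)·∑_{j=1}^{N−1} j·p_j − N·∑_{j=n+1}^{N−1} (j−n)·p_j. -/
/-!
Write `m j` for the row sums. Abel summation turns both weighted sums of `p` into tail sums of
`m`, and the left-hand side becomes `N k + N ∑_{j > n} m j`. The tail sum of row sums is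
nonpositive: antisymmetry cancels the block of `M` with both indices above `n`, and what remains
are the entries `M j l` with `l ≤ n < j`, which are `≤ 0`.
-/

open Finset

theorem sum_sum_eq_zero_of_antisymm {ι R : Type*} [AddCommGroup R] [IsAddTorsionFree R]
    {s : Finset ι} {M : ι → ι → R}
    (hanti : ∀ j ∈ s, ∀ l ∈ s, M j l = -M l j) :
    ∑ j ∈ s, ∑ l ∈ s, M j l = 0 := by
  have h : ∑ j ∈ s, ∑ l ∈ s, M j l = -∑ j ∈ s, ∑ l ∈ s, M j l := by
    calc ∑ j ∈ s, ∑ l ∈ s, M j l = ∑ j ∈ s, ∑ l ∈ s, -M l j :=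
          sum_congr rfl fun j hj => sum_congr rfl fun l hl => hanti j hj l hl
      _ = -∑ l ∈ s, ∑ j ∈ s, M l j := by rw [sum_comm]; simp only [sum_neg_distrib]
  exact self_eq_neg.mp h

theorem sum_filter_lt_sum_nonpos {α R : Type*} [LinearOrder α] [AddCommGroup R] [LinearOrder R]
    [IsOrderedAddMonoid R] {s : Finset α} {M : α → α → R}
    (hanti : ∀ j ∈ s, ∀ l ∈ s, M j l = -M l j)
    (hupper : ∀ j ∈ s, ∀ l ∈ s, j < l → 0 ≤ M j l) (a : α) :
    ∑ j ∈ s with a < j, ∑ l ∈ s, M j l ≤ 0 := by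
  set t := s.filter (a < ·)
  have hts : t ⊆ s := filter_subset _ _
  have hblock : ∑ j ∈ t, ∑ l ∈ t, M j l = 0 :=
    sum_sum_eq_zero_of_antisymm fun j hj l hl => hanti j (hts hj) l (hts hl)
  have hcross : ∑ j ∈ t, ∑ l ∈ s with ¬ a < l, M j l ≤ 0 := by
    refine sum_nonpos fun j hj => sum_nonpos fun l hl => ?_
    rw [mem_filter] at hj hl
    rw [hanti j hj.1 l hl.1, neg_nonpos]
    exact hupper l hl.1 j hj.1 ((not_lt.mp hl.2).trans_lt hj.2)
  calc ∑ j ∈ t, ∑ l ∈ s, M j l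
      = ∑ j ∈ t, ∑ l ∈ t, M j l + ∑ j ∈ t, ∑ l ∈ s with ¬ a < l, M j l := by
        rw [← sum_add_distrib]
        exact sum_congr rfl fun j _ => (sum_filter_add_sum_filter_not s _ _).symm
    _ ≤ 0 := by rw [hblock, zero_add]; exact hcross

theorem sum_Ico_mul_sub_succ (f : ℕ → ℤ) {a b : ℕ} (hab : a ≤ b) :
    ∑ j ∈ Ico a b, ((j : ℤ) + 1 - a) * (f j - f (j + 1))
      = ∑ j ∈ Ico a b, f j - ((b : ℤ) - a) * f b := by
  induction b, hab using Nat.le_induction with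
  | base => simp
  | succ b hab ih =>
    rw [sum_Ico_succ_top hab, sum_Ico_succ_top hab, ih]
    push_cast
    ring

theorem sum_Ico_mul_eq_of_eq_sub_sub {m p q : ℕ → ℤ} {a b : ℕ} (hab : a ≤ b)
    (hp : ∀ j ∈ Ico a b, p j = q j - (m j - m (j + 1))) :
    ∑ j ∈ Ico a b, ((j : ℤ) + 1 - a) * p j
      = ∑ j ∈ Ico a b, ((j : ℤ) + 1 - a) * q j - ∑ j ∈ Ico a b, m j + ((b : ℤ) - a) * m b := by
  rw [sum_congr rfl fun j hj => by rw [hp j hj, mul_sub], sum_sub_distrib,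
    sum_Ico_mul_sub_succ m hab]
  ring

theorem sum_Ico_mul_ite_pred_eq (k : ℤ) {a b : ℕ} (hab : a ≤ b) :
    ∑ j ∈ Ico a b, ((j : ℤ) + 1 - a) * (if j = b - 1 then k else 0) = ((b : ℤ) - a) * k := by
  rcases hab.eq_or_lt with rfl | hab
  · simp
  · simp only [mul_ite, mul_zero]
    rw [sum_ite_eq', if_pos (by simp only [mem_Ico]; omega)]
    push_cast [Nat.cast_sub (by omega : 1 ≤ b)]
    ring

theorem stmt_5_general (N : ℕ) (M : ℕ → ℕ → ℤ)
    (hanti : ∀ j ∈ Finset.Icc 1 N, ∀ l ∈ Finset.Icc 1 N, M j l = - M l j)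
    (hupper : ∀ j ∈ Finset.Icc 1 N, ∀ l ∈ Finset.Icc 1 N, j < l → 0 ≤ M j l)
    (k : ℤ) (p : ℕ → ℤ)
    (hp : ∀ j ∈ Finset.Icc 1 (N - 1),
      p j = (if j = 1 then k else 0) + (if j = N - 1 then k else 0)
        - ((∑ l ∈ Finset.Icc 1 N, M j l) - (∑ l ∈ Finset.Icc 1 N, M (j + 1) l))) :
    ∀ n, 1 ≤ n → n ≤ N - 1 →
      ((N : ℤ) - n) * (∑ j ∈ Finset.Icc 1 (N - 1), (j : ℤ) * p j)
        - (N : ℤ) * (∑ j ∈ Finset.Icc (n + 1) (N - 1), ((j : ℤ) - n) * p j)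
      ≤ (N : ℤ) * k := by
  intro n hn hnN
  set m : ℕ → ℤ := fun j => ∑ l ∈ Icc 1 N, M j l
  set q : ℕ → ℤ := fun j => (if j = 1 then k else 0) + (if j = N - 1 then k else 0)
  have hIcc : ∀ a, Icc a (N - 1) = Ico a N := fun a => by
    rw [← Ico_add_one_right_eq_Icc, Nat.sub_add_cancel (by omega)]
  have hIcc_split : ∀ a ≤ N, ∑ j ∈ Icc a N, m j = ∑ j ∈ Ico a N, m j + m N := fun a ha => by
    rw [← Ico_add_one_right_eq_Icc, sum_Ico_succ_top ha]
  have hp' : ∀ j ∈ Ico 1 N, p j = q j - (m j - m (j + 1)) := fun j hj => hp j (hIcc 1 ▸ hj)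
  have htotal : ∑ j ∈ Ico 1 N, m j + m N = 0 := by
    rw [← hIcc_split 1 (by omega)]
    exact sum_sum_eq_zero_of_antisymm hanti
  have htail : ∑ j ∈ Ico (n + 1) N, m j + m N ≤ 0 := by
    rw [← hIcc_split (n + 1) (by omega)]
    have hfilter : (Icc 1 N).filter (n < ·) = Icc (n + 1) N := by
      ext j; simp only [mem_Icc, mem_filter]; omega
    rw [← hfilter]
    exact sum_filter_lt_sum_nonpos hanti hupper n
  have hS1 : ∑ j ∈ Ico 1 N, (j : ℤ) * p j = N * k - ∑ j ∈ Ico 1 N, m j + (N - 1) * m N := by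
    have h := sum_Ico_mul_eq_of_eq_sub_sub (by omega : 1 ≤ N) hp'
    simp only [q, mul_add, sum_add_distrib] at h
    rw [sum_Ico_mul_ite_pred_eq k (by omega)] at h
    simp only [mul_ite, mul_zero, sum_ite_eq', mem_Ico, Nat.cast_one, add_sub_cancel_right] at h
    rw [h, if_pos (by omega)]
    ring
  have hS2 : ∑ j ∈ Ico (n + 1) N, ((j : ℤ) - n) * p j
      = (N - 1 - n) * k - ∑ j ∈ Ico (n + 1) N, m j + (N - 1 - n) * m N := by
    have h := sum_Ico_mul_eq_of_eq_sub_sub (by omega : n + 1 ≤ N)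
      fun j hj => hp' j (Ico_subset_Ico_left (by omega) hj)
    simp only [q, mul_add, sum_add_distrib] at h
    rw [sum_Ico_mul_ite_pred_eq k (by omega)] at h
    push_cast [mul_ite, mul_zero, sum_ite_eq', mem_Ico, add_sub_add_right_eq_sub] at h
    rw [h, if_neg (by omega)]
    ring
  rw [hIcc, hIcc, hS1, hS2]
  linear_combination (N : ℤ) * htail - ((N : ℤ) - n) * htotal

/-- Let `N ≥ 2`, let `M` be an `N × N` antisymmetric integer
matrix with nonnegative upper entries (row sums `m j`), let `k` be an integer,
and suppose `p j = k·δ_{j,1} + k·δ_{j,N-1} - (m j - m (j+1))` for `1 ≤ j ≤ N-1`.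
Then for every `1 ≤ n ≤ N-1`,
`N·k ≥ (N-n)·∑_{j=1}^{N-1} j·p j - N·∑_{j=n+1}^{N-1} (j-n)·p j`. -/
theorem stmt_5 (N : ℕ) (hN : 2 ≤ N) (M : ℕ → ℕ → ℤ)
    (hanti : ∀ j ∈ Finset.Icc 1 N, ∀ l ∈ Finset.Icc 1 N, M j l = - M l j)
    (hupper : ∀ j ∈ Finset.Icc 1 N, ∀ l ∈ Finset.Icc 1 N, j < l → 0 ≤ M j l)
    (k : ℤ) (p : ℕ → ℤ)
    (hp : ∀ j ∈ Finset.Icc 1 (N - 1),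
      p j = (if j = 1 then k else 0) + (if j = N - 1 then k else 0)
        - ((∑ l ∈ Finset.Icc 1 N, M j l) - (∑ l ∈ Finset.Icc 1 N, M (j + 1) l))) :
    ∀ n, 1 ≤ n → n ≤ N - 1 →
      ((N : ℤ) - n) * (∑ j ∈ Finset.Icc 1 (N - 1), (j : ℤ) * p j)
        - (N : ℤ) * (∑ j ∈ Finset.Icc (n + 1) (N - 1), ((j : ℤ) - n) * p j)
      ≤ (N : ℤ) * k :=
  stmt_5_general N M hanti hupper k p hp
end

section
/- Let N ≥ 3 and let p_1, …, p_{N−1} be nonnegative integers with p_{N−1} ≤ p_1, p_1 ≤ ∑_{i=2}^{N−1} (N−i)·p_i, and 2p_2 ≥ ∑_{i=3}^{N−1} (N−i)·p_i − p_1. Then max{k_n : 1 ≤ n ≤ N−1} = (2/N)·∑_{i=1}^{N−1} (N−i)·p_i − p_1, and the maximum is attained at n = N−2. -/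
/-!
The increment `k (n + 1) - k n = (∑ j * p j) / N - (p (N - 1) + ⋯ + p (N - n))` decreases in `n`
because the weights are nonnegative, so `k` is a concave sequence and is maximal wherever its
increment changes sign. Multiplied by `N`, the increments into and out of `N - 2` are
`p 1 + 2 p 2 - ∑_{i ≥ 3} (N - i) p i` and `p 1 - ∑_{i ≥ 2} (N - i) p i`, whose signs are the
last two hypotheses. Reflecting `j ↦ N - j` turns `k (N - 2)` into the closed form.
-/

open Finset

theorem apply_le_of_antitone_succ_sub {α : Type*} [AddCommGroup α] [LinearOrder α]
    [IsOrderedAddMonoid α] {f : ℕ → α} (hf : Antitone fun n => f (n + 1) - f n) {m : ℕ}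
    (hm : 0 ≤ f (m + 1) - f m) (hm' : f (m + 2) - f (m + 1) ≤ 0) (n : ℕ) :
    f n ≤ f (m + 1) := by
  rcases le_total n (m + 1) with hn | hn
  · refine Nat.decreasingInduction (motive := fun k _ => f k ≤ f (m + 1))
      (fun k hk ih => ?_) le_rfl hn
    exact (sub_nonneg.1 (hm.trans (hf (Nat.le_of_lt_succ hk)))).trans ih
  · refine Nat.rel_of_forall_rel_succ_of_le_of_le (· ≥ ·) (fun k hk => ?_) le_rfl hn
    exact sub_nonpos.1 ((hf hk).trans hm')

theorem sum_Icc_one_comp_sub {M : Type*} [AddCommMonoid M] (g : ℕ → M) {N n : ℕ}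
    (hN : 0 < N) (hn : n ≤ N) :
    ∑ j ∈ Icc 1 n, g (N - j) = ∑ i ∈ Icc (N - n) (N - 1), g i := by
  refine sum_nbij' (N - ·) (N - ·) ?_ ?_ ?_ ?_ ?_ <;> intro j hj <;>
    simp only [mem_Icc] at hj ⊢
  all_goals omega

def kSeq (N : ℕ) (p : ℕ → ℚ) (n : ℕ) : ℚ :=
  ((n : ℚ) / N) * ∑ j ∈ Icc 1 (N - 1), (j : ℚ) * p j
    - ∑ j ∈ Icc 1 n, ((n : ℚ) - j) * p (N - j)

variable {N : ℕ} {p : ℕ → ℚ}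

theorem kSeq_succ_sub (n : ℕ) :
    kSeq N p (n + 1) - kSeq N p n
      = (∑ j ∈ Icc 1 (N - 1), (j : ℚ) * p j) / N - ∑ j ∈ Icc 1 n, p (N - j) := by
  simp only [kSeq, Nat.cast_add, Nat.cast_one]
  rw [sum_Icc_succ_top (by omega)]
  have : ∑ j ∈ Icc 1 n, ((n : ℚ) + 1 - j) * p (N - j)
      = ∑ j ∈ Icc 1 n, ((n : ℚ) - j) * p (N - j) + ∑ j ∈ Icc 1 n, p (N - j) := by
    rw [← sum_add_distrib]; exact sum_congr rfl fun j _ => by ring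
  rw [this]
  push_cast
  ring

theorem antitone_kSeq_succ_sub (hp : ∀ i, 0 ≤ p i) :
    Antitone fun n => kSeq N p (n + 1) - kSeq N p n := by
  refine antitone_nat_of_succ_le fun n => ?_
  simp only [kSeq_succ_sub, sum_Icc_succ_top (Nat.le_add_left 1 n)]
  linarith [hp (N - (n + 1))]

theorem mul_kSeq_succ_sub_eq {a n : ℕ} (ha : 1 ≤ a) (hN : n + a = N) :
    (N : ℚ) * (kSeq N p (n + 1) - kSeq N p n)
      = ∑ i ∈ Ico 1 a, (i : ℚ) * p i - ∑ i ∈ Icc a (N - 1), ((N : ℚ) - i) * p i := by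
  have hN0 : (N : ℚ) ≠ 0 := by norm_cast; omega
  have hsplit (g : ℕ → ℚ) :
      ∑ i ∈ Icc 1 (N - 1), g i = ∑ i ∈ Ico 1 a, g i + ∑ i ∈ Icc a (N - 1), g i := by
    simp only [← Ico_add_one_right_eq_Icc, Nat.sub_add_cancel (by omega : 1 ≤ N)]
    exact (sum_Ico_consecutive g ha (by omega)).symm
  rw [kSeq_succ_sub, sum_Icc_one_comp_sub _ (by omega) (by omega), show N - n = a by omega,
    hsplit, mul_sub, mul_div_cancel₀ _ hN0, mul_sum]
  simp only [sub_mul, sum_sub_distrib]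
  ring

theorem kSeq_sub_two (hN : 2 ≤ N) :
    kSeq N p (N - 2) = 2 / N * ∑ i ∈ Icc 1 (N - 1), ((N : ℚ) - i) * p i - p 1 := by
  have hN0 : (N : ℚ) ≠ 0 := by norm_cast; omega
  have hreflect : ∑ j ∈ Icc 1 (N - 2), (((N - 2 : ℕ) : ℚ) - j) * p (N - j)
      = ∑ i ∈ Icc 2 (N - 1), ((i : ℚ) - 2) * p i := calc
    _ = ∑ j ∈ Icc 1 (N - 2), (((N - j : ℕ) : ℚ) - 2) * p (N - j) := by
      refine sum_congr rfl fun j hj => ?_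
      rw [mem_Icc] at hj
      push_cast [Nat.cast_sub (by omega : 2 ≤ N), Nat.cast_sub (by omega : j ≤ N)]
      ring
    _ = _ := by
      rw [sum_Icc_one_comp_sub (fun i => ((i : ℚ) - 2) * p i) (by omega) (by omega),
        show N - (N - 2) = 2 by omega]
  have hsplit (g : ℕ → ℚ) :
      ∑ i ∈ Icc 1 (N - 1), g i = g 1 + ∑ i ∈ Icc 2 (N - 1), g i :=
    (add_sum_Ioc_eq_sum_Icc (by omega)).symm
  rw [kSeq, hreflect, hsplit, hsplit, Nat.cast_sub hN]
  simp only [sub_mul, sum_sub_distrib, ← mul_sum]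
  field_simp
  push_cast
  ring

theorem stmt_14_general (N : ℕ) (hN : 3 ≤ N) (p : ℕ → ℕ)
    (h2 : (p 1 : ℤ) ≤ ∑ i ∈ Finset.Icc 2 (N - 1), ((N : ℤ) - i) * p i)
    (h3 : (∑ i ∈ Finset.Icc 3 (N - 1), ((N : ℤ) - i) * p i) - p 1 ≤ 2 * (p 2 : ℤ)) :
    let k : ℕ → ℚ := fun n =>
      ((n : ℚ) / N) * ∑ j ∈ Finset.Icc 1 (N - 1), (j : ℚ) * p j
        - ∑ j ∈ Finset.Icc 1 n, ((n : ℚ) - j) * p (N - j)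
    k (N - 2) = (2 / (N : ℚ)) * (∑ i ∈ Finset.Icc 1 (N - 1), ((N : ℚ) - i) * p i)
        - (p 1 : ℚ) ∧
      ∀ n ∈ Finset.Icc 1 (N - 1), k n ≤ k (N - 2) := by
  intro k
  have hk : k = kSeq N (fun i => p i) := rfl
  have hNpos : (0 : ℚ) < N := by positivity
  obtain ⟨m, hm⟩ : ∃ m, N - 2 = m + 1 := ⟨N - 3, by omega⟩
  have hrise : 0 ≤ k (m + 1) - k m := by
    refine nonneg_of_mul_nonneg_right ?_ hNpos
    rw [hk, mul_kSeq_succ_sub_eq (a := 3) (by norm_num) (by omega), sub_nonneg]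
    have h3' : ∑ i ∈ Icc 3 (N - 1), ((N : ℤ) - i) * p i ≤ p 1 + 2 * p 2 := by linarith
    norm_num [sum_Ico_succ_top]
    exact_mod_cast h3'
  have hfall : k (m + 2) - k (m + 1) ≤ 0 := by
    refine nonpos_of_mul_nonpos_right ?_ hNpos
    rw [hk, mul_kSeq_succ_sub_eq (a := 2) (by norm_num) (by omega), sub_nonpos]
    norm_num [sum_Ico_succ_top]
    exact_mod_cast h2
  rw [hm, hk]
  exact ⟨hm ▸ kSeq_sub_two (by omega), fun n _ =>
    apply_le_of_antitone_succ_sub (antitone_kSeq_succ_sub fun i => by positivity) hrise hfall n⟩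

/-- For `N ≥ 3` and nonnegative integers `p 1, …, p (N-1)` with
`p (N-1) ≤ p 1`, `p 1 ≤ ∑_{i=2}^{N-1} (N-i)·p i` and
`2·p 2 ≥ ∑_{i=3}^{N-1} (N-i)·p i - p 1`, with
`k n := (n/N)·∑_{j=1}^{N-1} j·p j - ∑_{j=1}^{n} (n-j)·p (N-j)`, one has
`max {k n | 1 ≤ n ≤ N-1} = (2/N)·∑_{i=1}^{N-1} (N-i)·p i - p 1`, the maximum
being attained at `n = N-2`. -/
theorem stmt_14 (N : ℕ) (hN : 3 ≤ N) (p : ℕ → ℕ)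
    (h1 : p (N - 1) ≤ p 1)
    (h2 : (p 1 : ℤ) ≤ ∑ i ∈ Finset.Icc 2 (N - 1), ((N : ℤ) - i) * p i)
    (h3 : (∑ i ∈ Finset.Icc 3 (N - 1), ((N : ℤ) - i) * p i) - p 1 ≤ 2 * (p 2 : ℤ)) :
    let k : ℕ → ℚ := fun n =>
      ((n : ℚ) / N) * ∑ j ∈ Finset.Icc 1 (N - 1), (j : ℚ) * p j
        - ∑ j ∈ Finset.Icc 1 n, ((n : ℚ) - j) * p (N - j)
    k (N - 2) = (2 / (N : ℚ)) * (∑ i ∈ Finset.Icc 1 (N - 1), ((N : ℚ) - i) * p i)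
        - (p 1 : ℚ) ∧
      ∀ n ∈ Finset.Icc 1 (N - 1), k n ≤ k (N - 2) :=
  stmt_14_general N hN p h2 h3
end
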